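/- Let f, g : ℝ^d → [0,∞) be proper log-concave functions with g of bounded support, and fix s > 0. If h₁ and h₂ are both solutions of the Positive position John s-problem for f and g (i.e., both maximize ∫h^s over h(x) = α·g(A⁻¹(x−a)) with A positive definite, α > 0, subject to h ≤ f), then h₁ = h₂. -/

import Mathlib

open MeasureTheory
noncomputable section

/-- `h` is a positive position of `g`: `h(x) = α·g(A⁻¹(x−a))` with `A` positive definite,
`α > 0`. -/
def IsPositivePosition {d : ℕ} (g h : (Fin d → ℝ) → ℝ) : Prop :=
  ∃ A : Matrix (Fin d) (Fin d) ℝ, ∃ α : ℝ, ∃ a : Fin d → ℝ,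
    A.PosDef ∧ 0 < α ∧ h = fun x => α * g (A⁻¹.mulVec (x - a))

/-!
Write a position as `u ↦ (a + A u, α g u)`; its `s`-integral is `α ^ s * det A * ∫ g ^ s`.
By log-concavity of `f`, if two positions lie below `f` then so does their geometric mean
`((a₁ + a₂) / 2, (A₁ + A₂) / 2, √(α₁ α₂))`. For two maximizers with `A₁ ≠ A₂`, the strict
Minkowski inequality `det A₁ det A₂ < det ((A₁ + A₂) / 2) ^ 2` makes this mean strictly better,
so `A₁ = A₂`, and then `α₁ = α₂` since the two values agree. If finally `a₁ ≠ a₂`, the position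
centred at `(a₁ + a₂) / 2` with matrix `A + τ δδᵀ`, `δ = a₁ - a₂`, still lies below `f` for small
`τ > 0` (as `g` has bounded support) and has a larger determinant: again a contradiction.
-/

open Matrix
open scoped MatrixOrder

def IsLogConcave {E : Type*} [AddCommGroup E] [Module ℝ E] (f : E → ℝ) : Prop :=
  ∀ x y : E, ∀ t : ℝ, 0 ≤ t → t ≤ 1 → f x ^ t * f y ^ (1 - t) ≤ f (t • x + (1 - t) • y)

namespace IsLogConcave

variable {E U : Type*} [AddCommGroup E] [Module ℝ E] {f : E → ℝ}

theorem rpow_mul_rpow_le (hf : IsLogConcave f) {x y : E} {v w t : ℝ} (hv : 0 ≤ v) (hw : 0 ≤ w)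
    (hvx : v ≤ f x) (hwy : w ≤ f y) (ht₀ : 0 ≤ t) (ht₁ : t ≤ 1) :
    v ^ t * w ^ (1 - t) ≤ f (t • x + (1 - t) • y) :=
  (mul_le_mul (Real.rpow_le_rpow hv hvx ht₀) (Real.rpow_le_rpow hw hwy (sub_nonneg.2 ht₁))
    (Real.rpow_nonneg hw _) (Real.rpow_nonneg (hv.trans hvx) _)).trans (hf x y t ht₀ ht₁)

theorem mul_le_of_forall_interpolates (hf : IsLogConcave f) (hf0 : ∀ x, 0 ≤ f x) {g : U → ℝ}
    (hg0 : ∀ u, 0 ≤ g u) {p₁ p₂ q : U → E} {α₁ α₂ β : ℝ} (hα₁ : 0 ≤ α₁) (hα₂ : 0 ≤ α₂)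
    (h₁ : ∀ u, α₁ * g u ≤ f (p₁ u)) (h₂ : ∀ u, α₂ * g u ≤ f (p₂ u))
    (hq : ∀ u, 0 < g u → ∃ t ∈ Set.Icc (0 : ℝ) 1,
      q u = t • p₁ u + (1 - t) • p₂ u ∧ β ≤ α₁ ^ t * α₂ ^ (1 - t)) (u : U) :
    β * g u ≤ f (q u) := by
  rcases (hg0 u).eq_or_lt with hgu | hgu
  · rw [← hgu, mul_zero]
    exact hf0 _
  obtain ⟨t, ⟨ht₀, ht₁⟩, hqu, hβ⟩ := hq u hgu
  have hsplit : g u = g u ^ t * g u ^ (1 - t) := by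
    rw [← Real.rpow_add' (hg0 u) (by norm_num), add_sub_cancel, Real.rpow_one]
  calc β * g u ≤ α₁ ^ t * α₂ ^ (1 - t) * g u := mul_le_mul_of_nonneg_right hβ (hg0 u)
    _ = (α₁ * g u) ^ t * (α₂ * g u) ^ (1 - t) := by
      rw [Real.mul_rpow hα₁ (hg0 u), Real.mul_rpow hα₂ (hg0 u), mul_mul_mul_comm, ← hsplit]
    _ ≤ f (q u) := hqu ▸
      hf.rpow_mul_rpow_le (by positivity) (by positivity) (h₁ u) (h₂ u) ht₀ ht₁

end IsLogConcave

namespace Matrix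

theorem PosDef.add_smul_vecMulVec {n : Type*} [Fintype n] {A : Matrix n n ℝ} (hA : A.PosDef)
    {τ : ℝ} (hτ : 0 ≤ τ) (δ : n → ℝ) : (A + τ • vecMulVec δ δ).PosDef :=
  hA.add_posSemidef ((posSemidef_vecMulVec_self_star δ).smul hτ)

variable {n : Type*} [Fintype n] [DecidableEq n]

theorem IsHermitian.det_cfc {A : Matrix n n ℝ} (hA : A.IsHermitian) (f : ℝ → ℝ) :
    (cfc f A).det = ∏ i, f (hA.eigenvalues i) := by
  simp [hA.cfc_eq, IsHermitian.cfc, -Unitary.conjStarAlgAut_apply]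

/-- Eigenvalue-wise this is `λ ≤ ((1 + λ) / 2) ^ 2`, strict unless `λ = 1`. -/
theorem PosDef.det_lt_det_half_one_add_sq {M : Matrix n n ℝ} (hM : M.PosDef) (hM1 : M ≠ 1) :
    M.det < ((2⁻¹ : ℝ) • (1 + M)).det ^ 2 := by
  set ev := hM.isHermitian.eigenvalues
  have hcfc : cfc (fun x : ℝ => 2⁻¹ * (1 + x)) M = (2⁻¹ : ℝ) • (1 + M) := by
    rw [cfc_const_mul (2⁻¹ : ℝ) (fun x : ℝ => 1 + x) M, cfc_add M (fun _ => 1) (fun x => x),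
      cfc_const_one ℝ M, cfc_id' ℝ M]
  obtain ⟨i, hi⟩ : ∃ i, ev i ≠ 1 := by
    by_contra! h
    refine hM1 ?_
    calc M = cfc id M := (cfc_id' ℝ M).symm
      _ = cfc (fun _ => (1 : ℝ)) M := cfc_congr fun x hx => by
          rw [hM.isHermitian.spectrum_real_eq_range_eigenvalues] at hx
          obtain ⟨i, rfl⟩ := hx
          exact h i
      _ = 1 := cfc_const_one ℝ M
  rw [← hcfc, hM.isHermitian.det_cfc, hM.isHermitian.det_eq_prod_eigenvalues, ← Finset.prod_pow]
  simp only [RCLike.ofReal_real_eq_id, id]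
  refine Finset.prod_lt_prod (fun i _ => hM.eigenvalues_pos i) (fun j _ => ?_)
    ⟨i, Finset.mem_univ _, ?_⟩
  · nlinarith [sq_nonneg (ev j - 1)]
  · nlinarith [sq_pos_of_ne_zero (sub_ne_zero.mpr hi)]

/-- Strict **Minkowski determinant inequality**; conjugating by `√A` reduces it to `A = 1`. -/
theorem PosDef.det_mul_det_lt_det_half_add_sq {A B : Matrix n n ℝ} (hA : A.PosDef)
    (hB : B.PosDef) (hAB : A ≠ B) :
    A.det * B.det < ((2⁻¹ : ℝ) • (A + B)).det ^ 2 := by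
  set C := CFC.sqrt A
  have hC : C.PosDef := (hA.isStrictlyPositive.sqrt A).posDef
  have hCC : C * C = A := CFC.sqrt_mul_sqrt_self A hA.posSemidef.nonneg
  have hCu : IsUnit C.det := hC.isUnit.map detMonoidHom
  set M := C⁻¹ * B * C⁻¹
  have hM : M.PosDef := by
    have := hB.conjTranspose_mul_mul_same
      (mulVec_injective_iff_isUnit.mpr (isUnit_nonsing_inv_iff.mpr hC.isUnit))
    rwa [hC.isHermitian.inv.eq] at this
  have hBM : B = C * M * C := by
    simp only [M, Matrix.mul_assoc, nonsing_inv_mul _ hCu, Matrix.mul_one]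
    rw [← Matrix.mul_assoc, mul_nonsing_inv _ hCu, Matrix.one_mul]
  have hM1 : M ≠ 1 := fun h => hAB (by rw [hBM, h, Matrix.mul_one, hCC])
  have hhalf : (2⁻¹ : ℝ) • (A + B) = C * ((2⁻¹ : ℝ) • (1 + M)) * C := by
    rw [hBM, ← hCC]
    simp only [Matrix.mul_add, Matrix.add_mul, Matrix.mul_smul, Matrix.smul_mul, Matrix.mul_one]
  have hCpos : 0 < C.det ^ 4 := pow_pos hC.det_pos 4
  calc A.det * B.det = C.det ^ 4 * M.det := by
        rw [hBM, ← hCC]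
        simp only [det_mul]
        ring
    _ < C.det ^ 4 * ((2⁻¹ : ℝ) • (1 + M)).det ^ 2 :=
        mul_lt_mul_of_pos_left (hM.det_lt_det_half_one_add_sq hM1) hCpos
    _ = ((2⁻¹ : ℝ) • (A + B)).det ^ 2 := by
        rw [hhalf]
        simp only [det_mul]
        ring

theorem PosDef.det_lt_det_add_smul_vecMulVec {A : Matrix n n ℝ} (hA : A.PosDef) {τ : ℝ}
    (hτ : 0 < τ) {δ : n → ℝ} (hδ : δ ≠ 0) : A.det < (A + τ • vecMulVec δ δ).det := by
  have hq : 0 < δ ⬝ᵥ A⁻¹ *ᵥ δ := by simpa using hA.inv.dotProduct_mulVec_pos hδ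
  have hdet : (A + τ • vecMulVec δ δ).det = A.det * (1 + τ * (δ ⬝ᵥ A⁻¹ *ᵥ δ)) := by
    rw [← smul_vecMulVec, vecMulVec_eq (Fin 1),
      det_add_replicateCol_mul_replicateRow hA.det_pos.ne'.isUnit,
      Matrix.mul_assoc, ← replicateCol_mulVec]
    simp [mulVec_smul]
  rw [hdet]
  nlinarith [hA.det_pos, mul_pos hτ hq]

end Matrix

section Positions

variable {ι : Type*} [Fintype ι] {f g : (ι → ℝ) → ℝ}

theorem integral_rpow_pos_of_isBounded_support {s : ℝ} (hs : 0 < s) (hg0 : ∀ u, 0 ≤ g u)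
    (hgusc : UpperSemicontinuous g) (hgint : Integrable g) (hgpos : 0 < ∫ u, g u)
    (hgsupp : Bornology.IsBounded {u | 0 < g u}) : 0 < ∫ u, g u ^ s := by
  have hsupp : Function.support (fun u => g u ^ s) = Function.support g := by
    ext u
    simp [Real.rpow_eq_zero (hg0 u) hs.ne']
  set K := closure {u | 0 < g u}
  have hK : IsCompact K := hgsupp.isCompact_closure
  obtain ⟨M, hM⟩ := (hgusc.upperSemicontinuousOn K).bddAbove_of_isCompact hK
  have hint : Integrable (fun u => g u ^ s) := by
    refine (integrableOn_iff_integrable_of_support_subset ?_).mp <|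
      Measure.integrableOn_of_bounded (M := M ^ s) hK.measure_lt_top.ne
        (hgusc.measurable.pow_const s).aestronglyMeasurable ?_
    · rw [hsupp]
      exact fun u hu => subset_closure ((hg0 u).lt_of_ne' hu)
    · refine (ae_restrict_iff' hK.measurableSet).mpr (.of_forall fun u hu => ?_)
      rw [Real.norm_of_nonneg (Real.rpow_nonneg (hg0 u) s)]
      exact Real.rpow_le_rpow (hg0 u) (hM ⟨u, hu, rfl⟩) hs.le
  rw [integral_pos_iff_support_of_nonneg (fun u => Real.rpow_nonneg (hg0 u) s) hint, hsupp]
  exact (integral_pos_iff_support_of_nonneg hg0 hgint).mp hgpos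

theorem IsLogConcave.midpoint_position_le (hf : IsLogConcave f) (hf0 : ∀ x, 0 ≤ f x)
    (hg0 : ∀ u, 0 ≤ g u) {A₁ A₂ : Matrix ι ι ℝ} {α₁ α₂ : ℝ} {a₁ a₂ : ι → ℝ} (hα₁ : 0 ≤ α₁)
    (hα₂ : 0 ≤ α₂) (h₁ : ∀ u, α₁ * g u ≤ f (a₁ + A₁ *ᵥ u))
    (h₂ : ∀ u, α₂ * g u ≤ f (a₂ + A₂ *ᵥ u)) (u : ι → ℝ) :
    √α₁ * √α₂ * g u ≤ f ((2⁻¹ : ℝ) • (a₁ + a₂) + ((2⁻¹ : ℝ) • (A₁ + A₂)) *ᵥ u) := by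
  refine hf.mul_le_of_forall_interpolates (β := √α₁ * √α₂)
    (q := fun u => (2⁻¹ : ℝ) • (a₁ + a₂) + ((2⁻¹ : ℝ) • (A₁ + A₂)) *ᵥ u) hf0 hg0 hα₁ hα₂ h₁ h₂
    (fun u _ => ⟨2⁻¹, ?_, ?_, ?_⟩) u
  · norm_num
  · rw [smul_mulVec, add_mulVec]
    module
  · rw [Real.sqrt_eq_rpow, Real.sqrt_eq_rpow]
    norm_num

theorem IsLogConcave.exists_stretched_position_le (hf : IsLogConcave f) (hf0 : ∀ x, 0 ≤ f x)
    (hg0 : ∀ u, 0 ≤ g u) (hgsupp : Bornology.IsBounded {u | 0 < g u}) {A : Matrix ι ι ℝ}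
    {α : ℝ} (hα : 0 ≤ α) {a₁ a₂ : ι → ℝ} (h₁ : ∀ u, α * g u ≤ f (a₁ + A *ᵥ u))
    (h₂ : ∀ u, α * g u ≤ f (a₂ + A *ᵥ u)) :
    ∃ τ : ℝ, 0 < τ ∧ ∀ u, α * g u ≤
      f ((2⁻¹ : ℝ) • (a₁ + a₂) + (A + τ • vecMulVec (a₁ - a₂) (a₁ - a₂)) *ᵥ u) := by
  set δ := a₁ - a₂
  obtain ⟨C, hC⟩ := hgsupp.isCompact_closure.exists_bound_of_continuousOn
    (continuous_const.dotProduct continuous_id (A := fun _ => δ)).continuousOn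
  set τ := (2 * (|C| + 1))⁻¹
  have hτ : 0 < τ := by positivity
  refine ⟨τ, hτ, hf.mul_le_of_forall_interpolates hf0 hg0 hα hα h₁ h₂ fun u hu =>
    ⟨2⁻¹ + τ * (δ ⬝ᵥ u), ?_, ?_, ?_⟩⟩
  · have hδu : |δ ⬝ᵥ u| ≤ |C| := (hC u (subset_closure hu)).trans (le_abs_self C)
    have hbound : |τ * (δ ⬝ᵥ u)| ≤ 2⁻¹ := by
      rw [abs_mul, abs_of_pos hτ]
      calc τ * |δ ⬝ᵥ u| ≤ τ * (|C| + 1) := by gcongr; linarith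
        _ = 2⁻¹ := by
          simp only [τ]
          field_simp
    constructor <;> linarith [abs_le.mp hbound]
  · rw [add_mulVec, smul_mulVec, vecMulVec_mulVec, op_smul_eq_smul]
    module
  · rw [← Real.rpow_add' hα (by norm_num), add_sub_cancel, Real.rpow_one]

variable [DecidableEq ι]

theorem integral_comp_inv_mulVec_sub (φ : (ι → ℝ) → ℝ) {A : Matrix ι ι ℝ} (hA : IsUnit A.det)
    (a : ι → ℝ) : ∫ x, φ (A⁻¹ *ᵥ (x - a)) = |A.det| * ∫ x, φ x := by
  have hdet : LinearMap.det (toLin' A⁻¹) ≠ 0 := by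
    simpa [LinearMap.det_toLin', det_nonsing_inv] using hA.ne_zero
  have hemb : MeasurableEmbedding (toLin' A⁻¹) :=
    (toLin' A⁻¹).continuous_of_finiteDimensional.measurableEmbedding <|
      mulVec_injective_iff_isUnit.mpr <|
        isUnit_nonsing_inv_iff.mpr ((isUnit_iff_isUnit_det A).mpr hA)
  have hmap := hemb.integral_map (μ := volume) φ
  rw [Real.map_linearMap_volume_pi_eq_smul_volume_pi hdet, integral_smul_measure] at hmap
  simp only [toLin'_apply] at hmap
  rw [integral_sub_right_eq_self (fun y => φ (A⁻¹ *ᵥ y)) a, ← hmap, LinearMap.det_toLin',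
    det_nonsing_inv, Ring.inverse_eq_inv', inv_inv, ENNReal.toReal_ofReal (abs_nonneg _),
    smul_eq_mul]

theorem integral_rpow_position (hg0 : ∀ u, 0 ≤ g u) (s : ℝ) {A : Matrix ι ι ℝ} (hA : A.PosDef)
    {α : ℝ} (hα : 0 ≤ α) (a : ι → ℝ) :
    ∫ x, (α * g (A⁻¹ *ᵥ (x - a))) ^ s = α ^ s * A.det * ∫ u, g u ^ s := by
  simp_rw [Real.mul_rpow hα (hg0 _)]
  rw [integral_const_mul, integral_comp_inv_mulVec_sub (fun u => g u ^ s)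
    hA.det_pos.ne'.isUnit a, abs_of_pos hA.det_pos, mul_assoc]

theorem forall_position_le_iff {A : Matrix ι ι ℝ} (hA : IsUnit A.det) {α : ℝ} {a : ι → ℝ} :
    (∀ x, α * g (A⁻¹ *ᵥ (x - a)) ≤ f x) ↔ ∀ u, α * g u ≤ f (a + A *ᵥ u) := by
  refine ⟨fun h u => ?_, fun h x => ?_⟩
  · simpa [mulVec_mulVec, nonsing_inv_mul _ hA] using h (a + A *ᵥ u)
  · simpa [mulVec_mulVec, mul_nonsing_inv _ hA] using h (A⁻¹ *ᵥ (x - a))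

theorem IsLogConcave.linear_part_eq_of_maximal (hf : IsLogConcave f) (hf0 : ∀ x, 0 ≤ f x)
    (hg0 : ∀ u, 0 ≤ g u) {s : ℝ} {A₁ A₂ : Matrix ι ι ℝ} {α₁ α₂ : ℝ} {a₁ a₂ : ι → ℝ}
    (hA₁ : A₁.PosDef) (hA₂ : A₂.PosDef) (hα₁ : 0 < α₁) (hα₂ : 0 < α₂)
    (h₁ : ∀ u, α₁ * g u ≤ f (a₁ + A₁ *ᵥ u)) (h₂ : ∀ u, α₂ * g u ≤ f (a₂ + A₂ *ᵥ u))
    (hsame : α₁ ^ s * A₁.det = α₂ ^ s * A₂.det)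
    (hmax : ∀ ⦃A : Matrix ι ι ℝ⦄ ⦃α : ℝ⦄ ⦃a : ι → ℝ⦄, A.PosDef → 0 < α →
      (∀ u, α * g u ≤ f (a + A *ᵥ u)) → α ^ s * A.det ≤ α₁ ^ s * A₁.det) :
    A₁ = A₂ := by
  by_contra hne
  set β := √α₁ * √α₂
  have hβ : 0 < β := mul_pos (Real.sqrt_pos.2 hα₁) (Real.sqrt_pos.2 hα₂)
  have hαs : 0 < α₁ ^ s * α₂ ^ s :=
    mul_pos (Real.rpow_pos_of_pos hα₁ s) (Real.rpow_pos_of_pos hα₂ s)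
  have hĀ : ((2⁻¹ : ℝ) • (A₁ + A₂)).PosDef := (hA₁.add hA₂).smul (by norm_num)
  have hβ2 : β ^ 2 = α₁ * α₂ := by rw [mul_pow, Real.sq_sqrt hα₁.le, Real.sq_sqrt hα₂.le]
  have hβs : (β ^ s) ^ 2 = α₁ ^ s * α₂ ^ s := by
    rw [← Real.rpow_mul_natCast hβ.le, mul_comm, Real.rpow_natCast_mul hβ.le,
      hβ2, Real.mul_rpow hα₁.le hα₂.le]
  have hle := hmax hĀ hβ (hf.midpoint_position_le hf0 hg0 hα₁.le hα₂.le h₁ h₂)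
  refine hle.not_gt <|
    lt_of_pow_lt_pow_left₀ 2 (mul_pos (Real.rpow_pos_of_pos hβ s) hĀ.det_pos).le ?_
  calc (α₁ ^ s * A₁.det) ^ 2 = (α₁ ^ s * α₂ ^ s) * (A₁.det * A₂.det) := by
        rw [sq]
        nth_rewrite 2 [hsame]
        ring
    _ < (α₁ ^ s * α₂ ^ s) * ((2⁻¹ : ℝ) • (A₁ + A₂)).det ^ 2 :=
        mul_lt_mul_of_pos_left (hA₁.det_mul_det_lt_det_half_add_sq hA₂ hne) hαs
    _ = (β ^ s * ((2⁻¹ : ℝ) • (A₁ + A₂)).det) ^ 2 := by rw [mul_pow, hβs]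

theorem IsLogConcave.translation_eq_of_maximal (hf : IsLogConcave f) (hf0 : ∀ x, 0 ≤ f x)
    (hg0 : ∀ u, 0 ≤ g u) (hgsupp : Bornology.IsBounded {u | 0 < g u}) {A : Matrix ι ι ℝ}
    (hA : A.PosDef) {α : ℝ} (hα : 0 ≤ α) {a₁ a₂ : ι → ℝ}
    (h₁ : ∀ u, α * g u ≤ f (a₁ + A *ᵥ u)) (h₂ : ∀ u, α * g u ≤ f (a₂ + A *ᵥ u))
    (hmax : ∀ {B : Matrix ι ι ℝ} {c : ι → ℝ}, B.PosDef →
      (∀ u, α * g u ≤ f (c + B *ᵥ u)) → B.det ≤ A.det) :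
    a₁ = a₂ := by
  by_contra hne
  obtain ⟨τ, hτ, hle⟩ := hf.exists_stretched_position_le hf0 hg0 hgsupp hα h₁ h₂
  exact (hmax (hA.add_smul_vecMulVec hτ.le _) hle).not_gt
    (hA.det_lt_det_add_smul_vecMulVec hτ (sub_ne_zero.mpr hne))

end Positions

theorem rpow_mul_det_le_of_forall_integral_le {d : ℕ} {f g : (Fin d → ℝ) → ℝ} {s : ℝ}
    (hg0 : ∀ u, 0 ≤ g u) (hJ : 0 < ∫ u, g u ^ s) {A₀ : Matrix (Fin d) (Fin d) ℝ} {α₀ : ℝ}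
    {a₀ : Fin d → ℝ} (hA₀ : A₀.PosDef) (hα₀ : 0 ≤ α₀)
    (hmax : ∀ h : (Fin d → ℝ) → ℝ, IsPositivePosition g h → (∀ x, h x ≤ f x) →
      ∫ x, h x ^ s ≤ ∫ x, (α₀ * g (A₀⁻¹ *ᵥ (x - a₀))) ^ s)
    ⦃A : Matrix (Fin d) (Fin d) ℝ⦄ ⦃α : ℝ⦄ ⦃a : Fin d → ℝ⦄ (hA : A.PosDef) (hα : 0 < α)
    (hle : ∀ u, α * g u ≤ f (a + A *ᵥ u)) :
    α ^ s * A.det ≤ α₀ ^ s * A₀.det := by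
  have := hmax _ ⟨A, α, a, hA, hα, rfl⟩ ((forall_position_le_iff hA.det_pos.ne'.isUnit).mpr hle)
  rw [integral_rpow_position hg0 s hA hα.le, integral_rpow_position hg0 s hA₀ hα₀] at this
  exact le_of_mul_le_mul_right this hJ

theorem positive_john_unique_general {d : ℕ} (s : ℝ) (hs : 0 < s)
    (f g : (Fin d → ℝ) → ℝ)
    (hf0 : ∀ x, 0 ≤ f x)
    (hflc : ∀ x y : Fin d → ℝ, ∀ t : ℝ, 0 ≤ t → t ≤ 1 →
      f x ^ t * f y ^ (1 - t) ≤ f (t • x + (1 - t) • y))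
    (hg0 : ∀ x, 0 ≤ g x) (hgusc : UpperSemicontinuous g)
    (hgint : Integrable g) (hgpos : 0 < ∫ x, g x)
    (hgsupp : Bornology.IsBounded {x | 0 < g x})
    (h₁ h₂ : (Fin d → ℝ) → ℝ)
    (hp₁ : IsPositivePosition g h₁) (hle₁ : ∀ x, h₁ x ≤ f x)
    (hmax₁ : ∀ h' : (Fin d → ℝ) → ℝ, IsPositivePosition g h' → (∀ x, h' x ≤ f x) →
      (∫ x, h' x ^ s) ≤ ∫ x, h₁ x ^ s)
    (hp₂ : IsPositivePosition g h₂) (hle₂ : ∀ x, h₂ x ≤ f x)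
    (hmax₂ : ∀ h' : (Fin d → ℝ) → ℝ, IsPositivePosition g h' → (∀ x, h' x ≤ f x) →
      (∫ x, h' x ^ s) ≤ ∫ x, h₂ x ^ s) :
    h₁ = h₂ := by
  obtain ⟨A₁, α₁, a₁, hA₁, hα₁, rfl⟩ := hp₁
  obtain ⟨A₂, α₂, a₂, hA₂, hα₂, rfl⟩ := hp₂
  have hf : IsLogConcave f := hflc
  have hJ := integral_rpow_pos_of_isBounded_support hs hg0 hgusc hgint hgpos hgsupp
  have hu₁ := (forall_position_le_iff hA₁.det_pos.ne'.isUnit).mp hle₁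
  have hu₂ := (forall_position_le_iff hA₂.det_pos.ne'.isUnit).mp hle₂
  have hopt₁ := rpow_mul_det_le_of_forall_integral_le hg0 hJ hA₁ hα₁.le hmax₁
  have hopt₂ := rpow_mul_det_le_of_forall_integral_le hg0 hJ hA₂ hα₂.le hmax₂
  have hsame := le_antisymm (hopt₂ hA₁ hα₁ hu₁) (hopt₁ hA₂ hα₂ hu₂)
  obtain rfl : A₁ = A₂ :=
    hf.linear_part_eq_of_maximal hf0 hg0 hA₁ hA₂ hα₁ hα₂ hu₁ hu₂ hsame hopt₁
  obtain rfl : α₁ = α₂ :=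
    (Real.rpow_left_inj hα₁.le hα₂.le hs.ne').mp (mul_right_cancel₀ hA₁.det_pos.ne' hsame)
  obtain rfl : a₁ = a₂ := hf.translation_eq_of_maximal hf0 hg0 hgsupp hA₁ hα₁.le hu₁ hu₂
    fun hB hle => le_of_mul_le_mul_left (hopt₁ hB hα₁ hle) (Real.rpow_pos_of_pos hα₁ s)
  rfl

/-- **Uniqueness in the Positive position John `s`-problem** for `g` of bounded support. -/
theorem positive_john_unique {d : ℕ} (s : ℝ) (hs : 0 < s)
    (f g : (Fin d → ℝ) → ℝ)
    (hf0 : ∀ x, 0 ≤ f x) (hfusc : UpperSemicontinuous f)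
    (hflc : ∀ x y : Fin d → ℝ, ∀ t : ℝ, 0 ≤ t → t ≤ 1 →
      f x ^ t * f y ^ (1 - t) ≤ f (t • x + (1 - t) • y))
    (hfint : Integrable f) (hfpos : 0 < ∫ x, f x)
    (hg0 : ∀ x, 0 ≤ g x) (hgusc : UpperSemicontinuous g)
    (hglc : ∀ x y : Fin d → ℝ, ∀ t : ℝ, 0 ≤ t → t ≤ 1 →
      g x ^ t * g y ^ (1 - t) ≤ g (t • x + (1 - t) • y))
    (hgint : Integrable g) (hgpos : 0 < ∫ x, g x)
    (hgsupp : Bornology.IsBounded {x | 0 < g x})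
    (h₁ h₂ : (Fin d → ℝ) → ℝ)
    (hp₁ : IsPositivePosition g h₁) (hle₁ : ∀ x, h₁ x ≤ f x)
    (hmax₁ : ∀ h' : (Fin d → ℝ) → ℝ, IsPositivePosition g h' → (∀ x, h' x ≤ f x) →
      (∫ x, h' x ^ s) ≤ ∫ x, h₁ x ^ s)
    (hp₂ : IsPositivePosition g h₂) (hle₂ : ∀ x, h₂ x ≤ f x)
    (hmax₂ : ∀ h' : (Fin d → ℝ) → ℝ, IsPositivePosition g h' → (∀ x, h' x ≤ f x) →
      (∫ x, h' x ^ s) ≤ ∫ x, h₂ x ^ s) :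
    h₁ = h₂ :=
  positive_john_unique_general s hs f g hf0 hflc hg0 hgusc hgint hgpos hgsupp h₁ h₂ hp₁ hle₁ hmax₁
    hp₂ hle₂ hmax₂
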